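/- Let N be an n×n negacirculant matrix over 𝔽₃. Then the two ternary [2n,n] codes generated by the matrices (I_n | N) and (I_n | Nᵀ) are equivalent. -/

import Mathlib

open Matrix

/-- The (Hamming) weight of a vector: the number of nonzero coordinates. -/
def wt {ι : Type*} [Fintype ι] (x : ι → ZMod 3) : ℕ :=
  (Finset.univ.filter fun i => x i ≠ 0).card

/-- The dual code of `C` with respect to the standard inner product. -/
def dualCode {ι : Type*} [Fintype ι] (C : Submodule (ZMod 3) (ι → ZMod 3)) :
    Submodule (ZMod 3) (ι → ZMod 3) where
  carrier := {x | ∀ c ∈ C, ∑ i, x i * c i = 0}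
  zero_mem' := by intro c hc; simp
  add_mem' := by
    intro a b ha hb c hc
    have h1 := ha c hc
    have h2 := hb c hc
    simp only [Pi.add_apply, add_mul, Finset.sum_add_distrib, h1, h2, add_zero]
  smul_mem' := by
    intro t a ha c hc
    have h1 := ha c hc
    simp only [Pi.smul_apply, smul_eq_mul, mul_assoc, ← Finset.mul_sum, h1, mul_zero]

/-- A code is self-dual if it equals its dual code. -/
def IsSelfDual {ι : Type*} [Fintype ι] (C : Submodule (ZMod 3) (ι → ZMod 3)) : Prop :=
  C = dualCode C

/-- `numWt C w` is the number `A_w` of codewords of `C` of weight `w`. -/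
noncomputable def numWt {ι : Type*} [Fintype ι] (C : Submodule (ZMod 3) (ι → ZMod 3)) (w : ℕ) : ℕ :=
  Nat.card {x : ι → ZMod 3 // x ∈ C ∧ wt x = w}

/-- The minimum weight of a code: the smallest weight of a nonzero codeword. -/
noncomputable def minWt {ι : Type*} [Fintype ι] (C : Submodule (ZMod 3) (ι → ZMod 3)) : ℕ :=
  sInf {w | ∃ x ∈ C, x ≠ 0 ∧ wt x = w}

/-- `C` performs better than `C'`: the weight distribution of `C` is
lexicographically smaller than that of `C'`. -/
def PerformsBetter {ι : Type*} [Fintype ι]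
    (C C' : Submodule (ZMod 3) (ι → ZMod 3)) : Prop :=
  ∃ s : ℕ, (∀ i < s, numWt C i = numWt C' i) ∧ numWt C s < numWt C' s

/-- A monomial matrix whose nonzero entries are `±1`. -/
def IsMonomial {ι : Type*} [Fintype ι] [DecidableEq ι] (M : Matrix ι ι (ZMod 3)) : Prop :=
  ∃ (σ : Equiv.Perm ι) (ε : ι → ZMod 3), (∀ i, ε i = 1 ∨ ε i = -1) ∧
    ∀ i j, M i j = if j = σ i then ε i else 0

/-- Two codes are equivalent if one is the image of the other under right
multiplication by a `(1,-1,0)`-monomial matrix. -/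
def CodeEquiv {ι : Type*} [Fintype ι] [DecidableEq ι]
    (C C' : Submodule (ZMod 3) (ι → ZMod 3)) : Prop :=
  ∃ M : Matrix ι ι (ZMod 3), IsMonomial M ∧ C' = C.map M.vecMulLinear

/-- The `m × m` circulant matrix with first row `r`:
entry `(i,j)` is `r ((j - i) mod m)`. -/
def circMatrix {m : ℕ} (r : Fin m → ZMod 3) : Matrix (Fin m) (Fin m) (ZMod 3) :=
  Matrix.of fun i j => r (j - i)

/-- The `m × m` negacirculant matrix with first row `r`:
entry `(i,j)` is `r ((j - i) mod m)` if `j ≥ i` and `-r ((j - i) mod m)` if `j < i`. -/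
def negacircMatrix {m : ℕ} (r : Fin m → ZMod 3) : Matrix (Fin m) (Fin m) (ZMod 3) :=
  Matrix.of fun i j => if (i : ℕ) ≤ (j : ℕ) then r (j - i) else - r (j - i)

/-- The generator matrix `( I_n | N )`. -/
def idConcat {n : ℕ} (N : Matrix (Fin n) (Fin n) (ZMod 3)) :
    Matrix (Fin n) (Fin (n + n)) (ZMod 3) :=
  Matrix.of fun i j =>
    if hj : (j : ℕ) < n then (if i = ⟨j, hj⟩ then 1 else 0)
    else N i ⟨(j : ℕ) - n, by have := j.isLt; omega⟩

/-- The code generated by a matrix: the row space, i.e. the span of the rows. -/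
def genCode {k n : ℕ} (G : Matrix (Fin k) (Fin n) (ZMod 3)) :
    Submodule (ZMod 3) (Fin n → ZMod 3) :=
  Submodule.span (ZMod 3) (Set.range fun i => G i)

/-- The `(m+1) × (m+1)` bordered block: first row `(α, β, …, β)`, and for `i ≥ 1`
row `i` is `γ` followed by row `i - 1` of the `m × m` circulant matrix with first row `r`. -/
def borderedBlock (m : ℕ) (α β γ : ZMod 3) (r : Fin m → ZMod 3) :
    Matrix (Fin (m + 1)) (Fin (m + 1)) (ZMod 3) :=
  Matrix.of fun i j =>
    if hi : (i : ℕ) = 0 then (if (j : ℕ) = 0 then α else β)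
    else if hj : (j : ℕ) = 0 then γ
    else circMatrix r ⟨(i : ℕ) - 1, by have := i.isLt; omega⟩
        ⟨(j : ℕ) - 1, by have := j.isLt; omega⟩

/-- The `2m × 2m` block matrix `[[A, B], [-Bᵀ, Aᵀ]]`. -/
def fourBlock {m : ℕ} (A B : Matrix (Fin m) (Fin m) (ZMod 3)) :
    Matrix (Fin (m + m)) (Fin (m + m)) (ZMod 3) :=
  Matrix.of fun i j =>
    if hi : (i : ℕ) < m then
      if hj : (j : ℕ) < m then A ⟨i, hi⟩ ⟨j, hj⟩
      else B ⟨i, hi⟩ ⟨(j : ℕ) - m, by have := j.isLt; omega⟩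
    else
      if hj : (j : ℕ) < m then
        (-Bᵀ) ⟨(i : ℕ) - m, by have := i.isLt; omega⟩ ⟨j, hj⟩
      else Aᵀ ⟨(i : ℕ) - m, by have := i.isLt; omega⟩ ⟨(j : ℕ) - m, by have := j.isLt; omega⟩

/-- `C` is a pure double circulant code: it is the row space of `( I_m | R )`
for some `m × m` circulant matrix `R`, where the length is `n = m + m`. -/
def IsPureDC {n : ℕ} (C : Submodule (ZMod 3) (Fin n → ZMod 3)) : Prop :=
  ∃ (m : ℕ) (h : n = m + m) (r : Fin m → ZMod 3),
    C = Submodule.span (ZMod 3)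
      (Set.range fun i => idConcat (circMatrix r) i ∘ Fin.cast h)

/-- `C` is a bordered double circulant code: it is the row space of `( I_{m+1} | B )`
where `B` is bordered from an `m × m` circulant matrix, and the length is
`n = (m+1) + (m+1)`. -/
def IsBorderedDC {n : ℕ} (C : Submodule (ZMod 3) (Fin n → ZMod 3)) : Prop :=
  ∃ (m : ℕ) (h : n = (m + 1) + (m + 1)) (α β γ : ZMod 3) (r : Fin m → ZMod 3),
    C = Submodule.span (ZMod 3)
      (Set.range fun i => idConcat (borderedBlock m α β γ r) i ∘ Fin.cast h)

/-- A double circulant code is a pure or bordered double circulant code. -/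
def IsDoubleCirculant {n : ℕ} (C : Submodule (ZMod 3) (Fin n → ZMod 3)) : Prop :=
  IsPureDC C ∨ IsBorderedDC C

/-- `C` is a double twistulant code: it is the row space of `( I_m | N )`
for some `m × m` negacirculant matrix `N`, where the length is `n = m + m`. -/
def IsTwistulant {n : ℕ} (C : Submodule (ZMod 3) (Fin n → ZMod 3)) : Prop :=
  ∃ (m : ℕ) (h : n = m + m) (r : Fin m → ZMod 3),
    C = Submodule.span (ZMod 3)
      (Set.range fun i => idConcat (negacircMatrix r) i ∘ Fin.cast h)

section Helper

/-- Reversal within each of the two blocks of `Fin (n + n)`. -/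
def revFun (n : ℕ) (j : Fin (n + n)) : Fin (n + n) :=
  if h : (j : ℕ) < n then ⟨n - 1 - (j : ℕ), by omega⟩
  else ⟨n + n + n - 1 - (j : ℕ), by have := j.isLt; omega⟩

lemma revFun_apply_lt (n : ℕ) (j : Fin (n + n)) (h : (j : ℕ) < n) :
    revFun n j = ⟨n - 1 - (j : ℕ), by omega⟩ := by
  unfold revFun; rw [dif_pos h]

lemma revFun_apply_ge (n : ℕ) (j : Fin (n + n)) (h : ¬ (j : ℕ) < n) :
    revFun n j = ⟨n + n + n - 1 - (j : ℕ), by have := j.isLt; omega⟩ := by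
  unfold revFun; rw [dif_neg h]

lemma revFun_invol (n : ℕ) : Function.Involutive (revFun n) := by
  intro j
  have hj := j.isLt
  by_cases h : (j : ℕ) < n
  · rw [revFun_apply_lt n j h, revFun_apply_lt n _ (by simp; omega)]
    apply Fin.ext; simp; omega
  · rw [revFun_apply_ge n j h, revFun_apply_ge n _ (by simp; omega)]
    apply Fin.ext; simp; omega

/-- Reversal of `Fin n`. -/
def revRow (n : ℕ) (i : Fin n) : Fin n := ⟨n - 1 - (i : ℕ), by have := i.isLt; omega⟩

lemma revRow_surj (n : ℕ) : Function.Surjective (revRow n) := by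
  intro i
  exact ⟨⟨n - 1 - (i : ℕ), by have := i.isLt; omega⟩, by
    apply Fin.ext; have := i.isLt; simp [revRow]; omega⟩

/-- The monomial (permutation) matrix of `revFun n`. -/
def revMat (n : ℕ) : Matrix (Fin (n + n)) (Fin (n + n)) (ZMod 3) :=
  Matrix.of fun i j => if j = revFun n i then 1 else 0

lemma vecMul_revMat (n : ℕ) (x : Fin (n + n) → ZMod 3) (j : Fin (n + n)) :
    Matrix.vecMul x (revMat n) j = x (revFun n j) := by
  simp only [Matrix.vecMul, dotProduct, revMat, Matrix.of_apply]
  have : ∀ i : Fin (n + n), (if j = revFun n i then (1 : ZMod 3) else 0)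
      = if i = revFun n j then 1 else 0 := by
    intro i
    by_cases h : i = revFun n j
    · subst h; simp [revFun_invol n j]
    · have : j ≠ revFun n i := fun hc => h (by rw [hc, revFun_invol])
      simp [h, this]
  simp only [this, mul_ite, mul_one, mul_zero]
  rw [Finset.sum_ite_eq' Finset.univ (revFun n j) x, if_pos (Finset.mem_univ _)]

lemma negacirc_symm (n : ℕ) (r : Fin n → ZMod 3) (i a : Fin n) :
    negacircMatrix r i ⟨n - 1 - (a : ℕ), by have := a.isLt; omega⟩
      = negacircMatrix r a ⟨n - 1 - (i : ℕ), by have := i.isLt; omega⟩ := by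
  have hi := i.isLt
  have ha := a.isLt
  have harg : (⟨n - 1 - (a : ℕ), by omega⟩ : Fin n) - i
      = (⟨n - 1 - (i : ℕ), by omega⟩ : Fin n) - a := by
    rw [Fin.sub_def, Fin.sub_def]
    apply Fin.ext
    simp only []
    congr 1
    omega
  simp only [negacircMatrix, Matrix.of_apply]
  split_ifs with h1 h2 h2 <;> first
    | (exfalso; omega)
    | rw [harg]

lemma key (n : ℕ) (r : Fin n → ZMod 3) (i : Fin n) (j : Fin (n + n)) :
    idConcat (negacircMatrix r) i (revFun n j)
      = idConcat (negacircMatrix r)ᵀ (revRow n i) j := by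
  have hi := i.isLt
  have hj := j.isLt
  unfold revFun revRow idConcat
  by_cases h : (j : ℕ) < n
  · rw [dif_pos h]
    simp only [Matrix.of_apply]
    rw [dif_pos (show n - 1 - (j : ℕ) < n by omega), dif_pos h]
    by_cases hc : i = (⟨n - 1 - (j : ℕ), by omega⟩ : Fin n)
    · have : (⟨n - 1 - (i : ℕ), by omega⟩ : Fin n) = ⟨(j : ℕ), h⟩ := by
        apply Fin.ext; simp; rw [hc]; simp; omega
      rw [if_pos hc, if_pos this]
    · have : (⟨n - 1 - (i : ℕ), by omega⟩ : Fin n) ≠ ⟨(j : ℕ), h⟩ := by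
        intro hc2
        apply hc
        apply Fin.ext
        have := Fin.mk.injEq .. ▸ hc2
        simp at hc2 ⊢
        omega
      rw [if_neg hc, if_neg this]
  · rw [dif_neg h]
    simp only [Matrix.of_apply]
    rw [dif_neg (show ¬ (n + n + n - 1 - (j : ℕ) < n) by omega), dif_neg h,
      Matrix.transpose_apply]
    have ha : (⟨(j : ℕ) - n, by omega⟩ : Fin n) = ⟨(j : ℕ) - n, by omega⟩ := rfl
    have := negacirc_symm n r i ⟨(j : ℕ) - n, by omega⟩
    convert this using 2 <;> apply Fin.ext <;> simp <;> omega

end Helper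

/-- for a negacirculant matrix `N`, the codes generated by
`( I_n | N )` and `( I_n | Nᵀ )` are equivalent. -/
theorem code_idConcat_negacirc_equiv_transpose (n : ℕ) (r : Fin n → ZMod 3) :
    CodeEquiv (genCode (idConcat (negacircMatrix r)))
      (genCode (idConcat (negacircMatrix r)ᵀ)) := by
  refine ⟨revMat n, ⟨(revFun_invol n).toPerm, fun _ => 1, fun _ => Or.inl rfl,
    fun i j => rfl⟩, ?_⟩
  unfold genCode
  rw [Submodule.map_span, ← Set.range_comp]
  congr 1
  have hfun : ((revMat n).vecMulLinear ∘ fun i => idConcat (negacircMatrix r) i)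
      = (fun i => idConcat (negacircMatrix r)ᵀ i) ∘ revRow n := by
    funext i
    funext j
    simp only [Function.comp_apply, Matrix.vecMulLinear_apply]
    rw [show (idConcat (negacircMatrix r) i) ᵥ* revMat n = Matrix.vecMul (idConcat (negacircMatrix r) i) (revMat n) from rfl]
    rw [vecMul_revMat]
    exact key n r i j
  rw [hfun, Set.range_comp, (revRow_surj n).range_eq, Set.image_univ]
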